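/- arXiv:1604.07225 — 2 statements merged into one kernel-verified Lean document; each statement's English description precedes it below -/
import Mathlib

section
/- Let n ≥ 1. If a formula θₙ of basic modal logic ML (over the empty set of proposition symbols, with atomic constants ⊤ and ⊥) separates the classes 𝒜ₙ and ℬₙ, then its size satisfies s(θₙ) ≥ tower(n−1). -/
universe u v

/-- A Kripke model for a set `Φ` of proposition symbols: a set of worlds `W`,
an accessibility relation `R` and a valuation `V`. -/
structure KripkeModel (Φ : Type) : Type (u + 1) where
  W : Type u
  R : W → W → Prop
  V : Φ → W → Prop

/-- A pointed Kripke model: a Kripke model together with a distinguished world. -/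
structure PointedModel (Φ : Type) : Type (u + 1) where
  M : KripkeModel.{u} Φ
  w : M.W

/-- Formulas of basic modal logic over the empty set of proposition symbols, in negation
normal form, generated from the atomic constants `⊤` and `⊥` by `∧`, `∨`, `◇`, `□`. -/
inductive MLF : Type where
  | top
  | bot
  | and (φ ψ : MLF)
  | or (φ ψ : MLF)
  | dia (φ : MLF)
  | box (φ : MLF)

/-- Standard Kripke semantics over frames (models for `Φ = ∅`). -/
def MLFSat (M : KripkeModel.{u} Empty) : M.W → MLF → Prop
  | _, .top => True
  | _, .bot => False
  | w, .and φ ψ => MLFSat M w φ ∧ MLFSat M w ψ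
  | w, .or φ ψ => MLFSat M w φ ∨ MLFSat M w ψ
  | w, .dia φ => ∃ x, M.R w x ∧ MLFSat M x φ
  | w, .box φ => ∀ x, M.R w x → MLFSat M x φ

/-- Literals over `Φ = ∅` are the atomic constants `⊤` and `⊥`. -/
def MLFIsLiteral : MLF → Prop
  | .top => True
  | .bot => True
  | _ => False

/-- The modal size `ms(φ)`: the number of modal operators `◇`, `□` in `φ`. -/
def mlfms : MLF → ℕ
  | .top => 0
  | .bot => 0
  | .and φ ψ => mlfms φ + mlfms ψ
  | .or φ ψ => mlfms φ + mlfms ψ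
  | .dia φ => mlfms φ + 1
  | .box φ => mlfms φ + 1

/-- The connective size `cs(φ)`: the number of binary connectives `∧`, `∨` in `φ`. -/
def mlfcs : MLF → ℕ
  | .top => 0
  | .bot => 0
  | .and φ ψ => mlfcs φ + mlfcs ψ + 1
  | .or φ ψ => mlfcs φ + mlfcs ψ + 1
  | .dia φ => mlfcs φ
  | .box φ => mlfcs φ

/-- A formula `φ` separates the classes `A` and `B` of pointed frames if `φ` is true in
every pointed frame of `A` and false in every pointed frame of `B`. -/
def MLFSeparates (φ : MLF) (A B : Set (PointedModel.{u} Empty)) : Prop :=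
  (∀ P ∈ A, MLFSat P.M P.w φ) ∧ (∀ P ∈ B, ¬ MLFSat P.M P.w φ)

/-- `n`-bisimilarity of pointed models: there are relations `Zₙ ⊆ … ⊆ Z₀` such that the
distinguished pair is in `Zₙ`, `Z₀` relates only propositionally equivalent points, and the
back-and-forth conditions hold for each `0 ≤ i ≤ n-1`. -/
def NBisim {Φ : Type} (n : ℕ) (M : KripkeModel.{u} Φ) (w : M.W)
    (N : KripkeModel.{v} Φ) (x : N.W) : Prop :=
  ∃ Z : ℕ → M.W → N.W → Prop,
    (∀ i, i < n → ∀ a b, Z (i + 1) a b → Z i a b) ∧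
    Z n w x ∧
    (∀ a b, Z 0 a b → ∀ p, M.V p a ↔ N.V p b) ∧
    (∀ i, i < n → ∀ a b, Z (i + 1) a b → ∀ c, M.R a c → ∃ d, N.R b d ∧ Z i c d) ∧
    (∀ i, i < n → ∀ a b, Z (i + 1) a b → ∀ d, N.R b d → ∃ c, M.R a c ∧ Z i c d)

/-- The class `𝒜ₙ` of all pointed frames `(A, w)` such that any two `R`-successors of `w`
are `n`-bisimilar.  Its complement is the class `ℬₙ`. -/
def classA (n : ℕ) : Set (PointedModel.{u} Empty) :=
  {P | ∀ a b : P.M.W, P.M.R P.w a → P.M.R P.w b → NBisim n P.M a P.M b}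

/-- The exponential tower function: `tower 0 = 1` and `tower (n+1) = 2 ^ tower n`. -/
def tower : ℕ → ℕ
  | 0 => 1
  | n + 1 => 2 ^ tower n

/-
Over the empty signature there are `tower n` pairwise non-`n`-bisimilar finite trees of depth
`n`: the children of the depth-`(k + 1)` tree `Tₐ` are the depth-`k` trees `Tᵢ` for the binary
digits `i` of `a` that are set. A formula `θ` evaluated at a root with two children `s, t` only
sees which arguments of the modal operators of `θ` hold at `s` and at `t`. If
`ms(θ) < tower (n - 1)`, there are at most `2 ^ ms(θ) < tower n` possible answers at a child, so
two distinct `Tₐ, T_b` give the same answers, and `θ` cannot tell the root `[Tₐ, Tₐ] ∈ 𝒜ₙ` from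
the root `[Tₐ, T_b] ∈ ℬₙ`.
-/

namespace NBisim

variable {Φ : Type} {n : ℕ}

theorem refl (M : KripkeModel.{u} Φ) (w : M.W) : NBisim n M w M w := by
  refine ⟨fun _ a b => a = b, fun _ _ _ _ h => h, rfl, ?_, ?_, ?_⟩
  · rintro a b rfl p
    rfl
  · rintro i - a b rfl c hc
    exact ⟨c, hc, rfl⟩
  · rintro i - a b rfl d hd
    exact ⟨d, hd, rfl⟩

theorem symm {M : KripkeModel.{u} Φ} {w : M.W} {N : KripkeModel.{v} Φ} {x : N.W}
    (h : NBisim n M w N x) : NBisim n N x M w := by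
  obtain ⟨Z, hdown, hZ, hV, hforth, hback⟩ := h
  exact ⟨fun i a b => Z i b a, fun i hi a b => hdown i hi b a, hZ,
    fun a b hab p => (hV b a hab p).symm, fun i hi a b => hback i hi b a,
    fun i hi a b => hforth i hi b a⟩

theorem exists_succ {M : KripkeModel.{u} Φ} {w : M.W} {N : KripkeModel.{v} Φ} {x : N.W}
    (h : NBisim (n + 1) M w N x) {c : M.W} (hc : M.R w c) :
    ∃ d, N.R x d ∧ NBisim n M c N d := by
  obtain ⟨Z, hdown, hZ, hV, hforth, hback⟩ := h
  obtain ⟨d, hd, hcd⟩ := hforth n n.lt_succ_self w x hZ c hc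
  exact ⟨d, hd, Z, fun i hi => hdown i (hi.trans n.lt_succ_self), hcd, hV,
    fun i hi => hforth i (hi.trans n.lt_succ_self), fun i hi => hback i (hi.trans n.lt_succ_self)⟩

end NBisim

def modalScopes : MLF → List MLF
  | .top => []
  | .bot => []
  | .and φ ψ => modalScopes φ ++ modalScopes ψ
  | .or φ ψ => modalScopes φ ++ modalScopes ψ
  | .dia φ => φ :: modalScopes φ
  | .box φ => φ :: modalScopes φ

theorem length_modalScopes : ∀ φ, (modalScopes φ).length = mlfms φ
  | .top | .bot => rfl
  | .and φ ψ | .or φ ψ => by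
      simp [modalScopes, mlfms, length_modalScopes φ, length_modalScopes ψ]
  | .dia φ | .box φ => by simp [modalScopes, mlfms, length_modalScopes φ]

theorem mlfsat_iff_of_modal_iff (M : KripkeModel.{u} Empty) {w w' : M.W} :
    ∀ φ : MLF, (∀ ψ ∈ modalScopes φ, MLFSat M w (.dia ψ) ↔ MLFSat M w' (.dia ψ)) →
      (∀ ψ ∈ modalScopes φ, MLFSat M w (.box ψ) ↔ MLFSat M w' (.box ψ)) →
      (MLFSat M w φ ↔ MLFSat M w' φ)
  | .top, _, _ | .bot, _, _ => Iff.rfl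
  | .and φ ψ, hd, hb | .or φ ψ, hd, hb => by
      have hφ := mlfsat_iff_of_modal_iff M φ (fun χ hχ => hd χ (by simp [modalScopes, hχ]))
        (fun χ hχ => hb χ (by simp [modalScopes, hχ]))
      have hψ := mlfsat_iff_of_modal_iff M ψ (fun χ hχ => hd χ (by simp [modalScopes, hχ]))
        (fun χ hχ => hb χ (by simp [modalScopes, hχ]))
      simp only [MLFSat, hφ, hψ]
  | .dia φ, hd, _ => hd φ (by simp [modalScopes])
  | .box φ, _, hb => hb φ (by simp [modalScopes])

inductive RoseTree : Type u where
  | node (children : List RoseTree)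

def RoseTree.children : RoseTree.{u} → List RoseTree.{u}
  | .node l => l

abbrev treeFrame : KripkeModel.{u} Empty :=
  ⟨RoseTree.{u}, fun t s => s ∈ t.children, fun p _ => p.elim⟩

section Pair

variable (s t : RoseTree.{u})

def pairTree : PointedModel.{u} Empty :=
  ⟨treeFrame, .node [s, t]⟩

theorem treeFrame_rel_pair_iff {c : RoseTree.{u}} :
    treeFrame.R (RoseTree.node [s, t]) c ↔ c = s ∨ c = t := by
  simp [RoseTree.children]

theorem mlfsat_pair_dia (ψ : MLF) :
    MLFSat treeFrame (RoseTree.node [s, t]) (.dia ψ) ↔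
      MLFSat treeFrame s ψ ∨ MLFSat treeFrame t ψ := by
  simp [MLFSat, RoseTree.children]

theorem mlfsat_pair_box (ψ : MLF) :
    MLFSat treeFrame (RoseTree.node [s, t]) (.box ψ) ↔
      MLFSat treeFrame s ψ ∧ MLFSat treeFrame t ψ := by
  simp [MLFSat, RoseTree.children]

theorem pairTree_mem_classA_iff (n : ℕ) :
    pairTree s t ∈ classA.{u} n ↔ NBisim n treeFrame s treeFrame t := by
  have hs : treeFrame.R (RoseTree.node [s, t]) s := (treeFrame_rel_pair_iff s t).2 (.inl rfl)
  have ht : treeFrame.R (RoseTree.node [s, t]) t := (treeFrame_rel_pair_iff s t).2 (.inr rfl)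
  refine ⟨fun h => h s t hs ht, fun h a b ha hb => ?_⟩
  obtain ha | ha := (treeFrame_rel_pair_iff s t).1 ha <;>
    obtain hb | hb := (treeFrame_rel_pair_iff s t).1 hb <;> subst a b
  exacts [NBisim.refl _ _, h, h.symm, NBisim.refl _ _]

end Pair

theorem mlfsat_pair_iff_of_agree (s t t' : RoseTree.{u}) (φ : MLF)
    (h : ∀ ψ ∈ modalScopes φ, MLFSat treeFrame t ψ ↔ MLFSat treeFrame t' ψ) :
    MLFSat treeFrame (RoseTree.node [s, t]) φ ↔ MLFSat treeFrame (RoseTree.node [s, t']) φ :=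
  mlfsat_iff_of_modal_iff treeFrame φ
    (fun ψ hψ => by rw [mlfsat_pair_dia, mlfsat_pair_dia, h ψ hψ])
    (fun ψ hψ => by rw [mlfsat_pair_box, mlfsat_pair_box, h ψ hψ])

theorem MLFSeparates.nbisim_of_agree {n : ℕ} {θ : MLF}
    (hsep : MLFSeparates θ (classA.{u} n) (classA.{u} n)ᶜ) {s t : RoseTree.{u}}
    (h : ∀ ψ ∈ modalScopes θ, MLFSat treeFrame s ψ ↔ MLFSat treeFrame t ψ) :
    NBisim n treeFrame s treeFrame t := by
  have hss : MLFSat treeFrame (RoseTree.node [s, s]) θ :=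
    hsep.1 _ ((pairTree_mem_classA_iff s s n).2 (NBisim.refl _ _))
  have hst : MLFSat treeFrame (RoseTree.node [s, t]) θ :=
    (mlfsat_pair_iff_of_agree s s t θ h).1 hss
  by_contra hn
  exact hsep.2 _ (mt (pairTree_mem_classA_iff s t n).1 hn) hst

def typeTree : ℕ → ℕ → RoseTree.{u}
  | 0, _ => .node []
  | k + 1, a => .node (((List.range (tower k)).filter a.testBit).map (typeTree k))

theorem treeFrame_rel_typeTree_succ_iff {k a : ℕ} {t : RoseTree.{u}} :
    treeFrame.R (typeTree (k + 1) a) t ↔ ∃ i < tower k, a.testBit i ∧ typeTree k i = t := by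
  simp [typeTree, RoseTree.children, and_assoc]

theorem typeTree_eq_of_nbisim : ∀ {k a b : ℕ}, a < tower k → b < tower k →
    NBisim k treeFrame (typeTree.{u} k a) treeFrame (typeTree.{u} k b) → a = b
  | 0, a, b, ha, hb, _ => by simp only [tower] at ha hb; omega
  | k + 1, a, b, ha, hb, h => by
      have testBit_imp : ∀ {a b}, a < tower (k + 1) →
          NBisim (k + 1) treeFrame (typeTree.{u} (k + 1) a) treeFrame (typeTree.{u} (k + 1) b) →
          ∀ i, a.testBit i → b.testBit i := by
        intro a b ha h i hi
        have hik : i < tower k :=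
          (Nat.pow_lt_pow_iff_right one_lt_two).1 ((Nat.ge_two_pow_of_testBit hi).trans_lt ha)
        obtain ⟨t, ht, hit⟩ :=
          h.exists_succ (treeFrame_rel_typeTree_succ_iff.2 ⟨i, hik, hi, rfl⟩)
        obtain ⟨j, hjk, hj, rfl⟩ := treeFrame_rel_typeTree_succ_iff.1 ht
        rwa [typeTree_eq_of_nbisim hik hjk hit]
      exact Nat.eq_of_testBit_eq fun i => Bool.eq_iff_iff.2
        ⟨testBit_imp ha h i, testBit_imp hb h.symm i⟩

theorem exists_ne_agree_of_two_pow_lt (M : KripkeModel.{u} Empty) (T : ℕ → M.W) (L : List MLF)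
    {N : ℕ} (hN : 2 ^ L.length < N) :
    ∃ a < N, ∃ b < N, a ≠ b ∧ ∀ ψ ∈ L, MLFSat M (T a) ψ ↔ MLFSat M (T b) ψ := by
  classical
  have hcard : L.toFinset.powerset.card < (Finset.range N).card := by
    rw [Finset.card_powerset, Finset.card_range]
    exact (Nat.pow_le_pow_right two_pos L.toFinset_card_le).trans_lt hN
  obtain ⟨a, ha, b, hb, hab, heq⟩ := Finset.exists_ne_map_eq_of_card_lt_of_maps_to hcard
    (f := fun a => L.toFinset.filter (MLFSat M (T a)))
    (fun a _ => Finset.mem_powerset.2 (Finset.filter_subset _ _))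
  refine ⟨a, Finset.mem_range.1 ha, b, Finset.mem_range.1 hb, hab, fun ψ hψ => ?_⟩
  simpa [hψ] using Finset.ext_iff.1 heq ψ

/-- **Theorem 18 (Hella–Vilander).**  Every `ML`-formula separating the classes `𝒜ₙ` and
`ℬₙ` has size (number of modal operators plus number of binary connectives) at least
`tower (n - 1)`. -/
theorem ml_separating_formula_size_lower_bound (n : ℕ) (hn : 1 ≤ n) (θ : MLF)
    (hsep : MLFSeparates θ (classA.{u} n) (classA.{u} n)ᶜ) :
    tower (n - 1) ≤ mlfms θ + mlfcs θ := by
  obtain ⟨k, rfl⟩ : ∃ k, n = k + 1 := ⟨n - 1, by omega⟩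
  refine le_trans ?_ (Nat.le_add_right _ _)
  by_contra! hlt
  have hcount : 2 ^ (modalScopes θ).length < tower (k + 1) := by
    rw [length_modalScopes]
    exact Nat.pow_lt_pow_right one_lt_two hlt
  obtain ⟨a, ha, b, hb, hab, hagree⟩ :=
    exists_ne_agree_of_two_pow_lt treeFrame (typeTree.{u} (k + 1)) (modalScopes θ) hcount
  exact hab (typeTree_eq_of_nbisim ha hb (hsep.nbisim_of_agree hagree))
end

section
/- Bisimulation invariant first-order logic is nonelementarily more succinct than basic modal logic: for every n ≥ 1 there is a first-order formula φₙ(x) over the vocabulary {R} of size s(φₙ) = 3·2^{n+2} − 7 (hence O(2ⁿ)) whose class of pointed frames is bisimulation invariant and is definable in ML, but every ML-formula θ defining the same class of pointed frames has size s(θ) ≥ tower(n−1). -/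
universe u v

/-- First-order formulas over the vocabulary `{R}` (with equality); variables are
natural numbers. -/
inductive FOForm : Type where
  | rel (x y : ℕ)
  | eq (x y : ℕ)
  | not (φ : FOForm)
  | and (φ ψ : FOForm)
  | or (φ ψ : FOForm)
  | ex (x : ℕ) (φ : FOForm)
  | all (x : ℕ) (φ : FOForm)

/-- Standard first-order semantics over a frame `(W, R)` under an assignment `s`. -/
def FOSat {W : Type u} (R : W → W → Prop) (s : ℕ → W) : FOForm → Prop
  | .rel x y => R (s x) (s y)
  | .eq x y => s x = s y
  | .not φ => ¬ FOSat R s φ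
  | .and φ ψ => FOSat R s φ ∧ FOSat R s ψ
  | .or φ ψ => FOSat R s φ ∨ FOSat R s ψ
  | .ex x φ => ∃ a : W, FOSat R (Function.update s x a) φ
  | .all x φ => ∀ a : W, FOSat R (Function.update s x a) φ

/-- The size of a first-order formula: the number of its quantifiers and binary
connectives (literals have size `0` and negation does not add to the size). -/
def fosize : FOForm → ℕ
  | .rel _ _ => 0
  | .eq _ _ => 0
  | .not φ => fosize φ
  | .and φ ψ => fosize φ + fosize ψ + 1
  | .or φ ψ => fosize φ + fosize ψ + 1
  | .ex _ φ => fosize φ + 1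
  | .all _ φ => fosize φ + 1

/-- Bisimilarity of pointed models: the standard back-and-forth relation. -/
def Bisimilar {Φ : Type} (M : KripkeModel.{u} Φ) (w : M.W)
    (N : KripkeModel.{v} Φ) (x : N.W) : Prop :=
  ∃ Z : M.W → N.W → Prop,
    Z w x ∧
    (∀ a b, Z a b → ∀ p, M.V p a ↔ N.V p b) ∧
    (∀ a b, Z a b → ∀ c, M.R a c → ∃ d, N.R b d ∧ Z c d) ∧
    (∀ a b, Z a b → ∀ d, N.R b d → ∃ c, M.R a c ∧ Z c d)

/-- An `ML`-formula `θ` and a first-order formula `ψ(x)` (free variable `x` = variable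
`0`) are equivalent if they define the same class of pointed frames. -/
def MLFOEquiv (θ : MLF) (ψ : FOForm) : Prop :=
  ∀ P : PointedModel.{u} Empty,
    MLFSat P.M P.w θ ↔ (∀ s : ℕ → P.M.W, s 0 = P.w → FOSat P.M.R s ψ)


/-!
The depth-`k` bisimulation types of points form the sets `BisimType k` with
`BisimType (k+1) = Set (BisimType k)`, so there are `tower k` of them. "Two successors of `x`
have distinct depth-`n` types" is bisimulation invariant and is expressed in first-order logic
by recursively comparing types with two fresh variables per level, at size `O(2ⁿ)`; in `ML`
it is a disjunction over characteristic formulas of types.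

For the lower bound, point the canonical frame of types at a set `F` of depth-`n` types; its
successors realise exactly the types in `F`. Whether a modal formula `θ` holds there depends
only on which arguments of top-level modalities of `θ` hold at the successors. If `θ` expresses
that `F` has two elements, the truth values of these (at most `ms θ`) arguments must separate
all `tower n` depth-`n` types, so `tower n ≤ 2 ^ ms θ`, i.e. `tower (n - 1) ≤ ms θ`.
-/

abbrev BisimType : ℕ → Type
  | 0 => PUnit
  | k + 1 => Set (BisimType k)

instance BisimType.instFintype : (k : ℕ) → Fintype (BisimType k)
  | 0 => inferInstanceAs (Fintype PUnit)
  | k + 1 =>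
    have := BisimType.instFintype k
    inferInstanceAs (Fintype (Set (BisimType k)))

theorem card_bisimType : ∀ k, Fintype.card (BisimType k) = tower k
  | 0 => Fintype.card_punit
  | k + 1 => (Fintype.card_set (α := BisimType k)).trans (by rw [card_bisimType k, tower])

section BisimType

variable {W : Type u} {W' : Type v}

def bisimType (R : W → W → Prop) : (k : ℕ) → W → BisimType k
  | 0, _ => PUnit.unit
  | k + 1, w => bisimType R k '' {x | R w x}

theorem bisimType_succ_eq_iff (R : W → W → Prop) (R' : W' → W' → Prop) (k : ℕ) (w : W)
    (w' : W') :
    bisimType R (k + 1) w = bisimType R' (k + 1) w' ↔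
      (∀ x, R w x → ∃ x', R' w' x' ∧ bisimType R k x = bisimType R' k x') ∧
      (∀ x', R' w' x' → ∃ x, R w x ∧ bisimType R k x = bisimType R' k x') := by
  rw [bisimType, bisimType, Set.Subset.antisymm_iff, Set.image_subset_iff, Set.image_subset_iff]
  exact and_congr (forall₂_congr fun _ _ => exists_congr fun _ => and_congr_right' eq_comm) Iff.rfl

theorem Bisimilar.bisimType_eq {Φ : Type} {M : KripkeModel.{u} Φ} {N : KripkeModel.{v} Φ}
    {w : M.W} {w' : N.W} (h : Bisimilar M w N w') (k : ℕ) :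
    bisimType M.R k w = bisimType N.R k w' := by
  obtain ⟨Z, hZ, -, forth, back⟩ := h
  induction k generalizing w w' with
  | zero => rfl
  | succ k ih =>
    rw [bisimType_succ_eq_iff]
    constructor
    · intro x hx
      obtain ⟨x', hx', hZx⟩ := forth w w' hZ x hx
      exact ⟨x', hx', ih hZx⟩
    · intro x' hx'
      obtain ⟨x, hx, hZx⟩ := back w w' hZ x' hx'
      exact ⟨x, hx, ih hZx⟩

end BisimType

namespace FOForm

-- The bound variables are taken above `max p q`, so they never capture `p` or `q`.
def sameBisimType : ℕ → ℕ → ℕ → FOForm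
  | 0, p, _ => .eq p p
  | k + 1, p, q =>
    .and
      (.all (max p q + 1) (.or (.not (.rel p (max p q + 1)))
        (.ex (max p q + 2) (.and (.rel q (max p q + 2))
          (sameBisimType k (max p q + 1) (max p q + 2))))))
      (.all (max p q + 1) (.or (.not (.rel q (max p q + 1)))
        (.ex (max p q + 2) (.and (.rel p (max p q + 2))
          (sameBisimType k (max p q + 1) (max p q + 2))))))

theorem fosize_sameBisimType (k p q : ℕ) : fosize (sameBisimType k p q) = 9 * 2 ^ k - 9 := by
  induction k generalizing p q with
  | zero => rfl
  | succ k ih =>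
    simp only [sameBisimType, fosize, ih]
    have := Nat.one_le_two_pow (n := k)
    rw [pow_succ]
    omega

theorem foSat_sameBisimType {W : Type u} (R : W → W → Prop) (k p q : ℕ) (s : ℕ → W) :
    FOSat R s (sameBisimType k p q) ↔ bisimType R k (s p) = bisimType R k (s q) := by
  induction k generalizing p q s with
  | zero => exact iff_of_true rfl rfl
  | succ k ih =>
    have hp1 : p ≠ max p q + 1 := by omega
    have hq1 : q ≠ max p q + 1 := by omega
    have hp2 : p ≠ max p q + 2 := by omega
    have hq2 : q ≠ max p q + 2 := by omega
    have h12 : max p q + 1 ≠ max p q + 2 := by omega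
    rw [bisimType_succ_eq_iff]
    simp only [sameBisimType, FOSat, ih, Function.update_self, Function.update_of_ne hp1,
      Function.update_of_ne hq1, Function.update_of_ne hp2, Function.update_of_ne hq2,
      Function.update_of_ne h12, ← imp_iff_not_or]
    refine and_congr Iff.rfl (forall₂_congr fun _ _ => exists_congr fun _ => ?_)
    exact and_congr_right' eq_comm

def distinctSuccTypes (n : ℕ) : FOForm :=
  .ex 1 (.ex 2 (.and (.rel 0 1) (.and (.rel 0 2) (.not (sameBisimType n 1 2)))))

def padTrue : ℕ → FOForm → FOForm
  | 0, φ => φ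
  | m + 1, φ => .and (.eq 0 0) (padTrue m φ)

theorem fosize_padTrue (m : ℕ) (φ : FOForm) : fosize (padTrue m φ) = fosize φ + m := by
  induction m with
  | zero => rfl
  | succ m ih => simp only [padTrue, fosize, ih]; omega

theorem foSat_padTrue {W : Type u} (R : W → W → Prop) (m : ℕ) (φ : FOForm) (s : ℕ → W) :
    FOSat R s (padTrue m φ) ↔ FOSat R s φ := by
  induction m with
  | zero => rfl
  | succ m ih => exact (and_iff_right rfl).trans ih

end FOForm

open FOForm

-- `distinctSuccTypes n` has size `9 · 2 ^ n - 5`; trivially true conjuncts bring it to the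
-- prescribed size `3 · 2 ^ (n + 2) - 7`.
def succinctFormula (n : ℕ) : FOForm :=
  padTrue (3 * 2 ^ n - 2) (distinctSuccTypes n)

theorem fosize_succinctFormula (n : ℕ) : fosize (succinctFormula n) = 3 * 2 ^ (n + 2) - 7 := by
  simp only [succinctFormula, fosize_padTrue, distinctSuccTypes, fosize, fosize_sameBisimType]
  have := Nat.one_le_two_pow (n := n)
  rw [pow_add]
  omega

theorem foSat_succinctFormula {W : Type u} (R : W → W → Prop) (n : ℕ) (s : ℕ → W) :
    FOSat R s (succinctFormula n) ↔ (bisimType R (n + 1) (s 0)).Nontrivial := by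
  simp only [succinctFormula, foSat_padTrue, distinctSuccTypes, FOSat, foSat_sameBisimType,
    Function.update_self, Function.update_of_ne (show (0 : ℕ) ≠ 1 by omega),
    Function.update_of_ne (show (0 : ℕ) ≠ 2 by omega),
    Function.update_of_ne (show (1 : ℕ) ≠ 2 by omega), bisimType, Set.Nontrivial, Set.exists_mem_image, Set.mem_ofPred_eq, ne_eq, exists_and_left]

theorem forall_foSat_succinctFormula_iff {W : Type u} (R : W → W → Prop) (n : ℕ) (w : W) :
    (∀ s : ℕ → W, s 0 = w → FOSat R s (succinctFormula n)) ↔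
      (bisimType R (n + 1) w).Nontrivial := by
  simp only [foSat_succinctFormula]
  exact ⟨fun h => h (fun _ => w) rfl, fun h s hs => hs ▸ h⟩

theorem mlfoEquiv_succinctFormula_iff (θ : MLF) (n : ℕ) :
    MLFOEquiv.{u} θ (succinctFormula n) ↔
      ∀ P : PointedModel.{u} Empty, MLFSat P.M P.w θ ↔ (bisimType P.M.R (n + 1) P.w).Nontrivial :=
  forall_congr' fun P => iff_congr Iff.rfl (forall_foSat_succinctFormula_iff P.M.R n P.w)

namespace MLF

def bigAnd : List MLF → MLF
  | [] => .top
  | φ :: l => .and φ (bigAnd l)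

def bigOr : List MLF → MLF
  | [] => .bot
  | φ :: l => .or φ (bigOr l)

variable {M : KripkeModel.{u} Empty}

theorem sat_bigAnd (w : M.W) (l : List MLF) : MLFSat M w (bigAnd l) ↔ ∀ φ ∈ l, MLFSat M w φ := by
  induction l with
  | nil => simp [bigAnd, MLFSat]
  | cons φ l ih => simp [bigAnd, MLFSat, ih]

theorem sat_bigOr (w : M.W) (l : List MLF) : MLFSat M w (bigOr l) ↔ ∃ φ ∈ l, MLFSat M w φ := by
  induction l with
  | nil => simp [bigOr, MLFSat]
  | cons φ l ih => simp [bigOr, MLFSat, ih]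

open Classical in
noncomputable def charFormula : (k : ℕ) → BisimType k → MLF
  | 0, _ => .top
  | k + 1, F =>
    let types := (Finset.univ.filter (· ∈ F)).toList
    .and (bigAnd (types.map fun t => .dia (charFormula k t)))
      (.box (bigOr (types.map (charFormula k))))

theorem sat_charFormula (k : ℕ) (t : BisimType k) (w : M.W) :
    MLFSat M w (charFormula k t) ↔ bisimType M.R k w = t := by
  induction k generalizing w with
  | zero => exact iff_of_true trivial rfl
  | succ k ih =>
    simp only [charFormula, MLFSat, sat_bigAnd, sat_bigOr, List.mem_map,
      exists_exists_and_eq_and, forall_exists_index, and_imp, forall_apply_eq_imp_iff₂,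
      Finset.mem_toList, Finset.mem_filter, Finset.mem_univ, true_and, ih, bisimType]
    rw [Set.Subset.antisymm_iff, Set.image_subset_iff, and_comm]
    simp [Set.subset_def]

open Classical in
noncomputable def definingFormula (k : ℕ) (P : BisimType k → Prop) : MLF :=
  bigOr ((Finset.univ.filter P).toList.map (charFormula k))

theorem sat_definingFormula (k : ℕ) (P : BisimType k → Prop) (w : M.W) :
    MLFSat M w (definingFormula k P) ↔ P (bisimType M.R k w) := by
  simp [definingFormula, sat_bigOr, sat_charFormula]


def topModalArgs : MLF → List MLF
  | .top => []
  | .bot => []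
  | .and φ ψ => topModalArgs φ ++ topModalArgs ψ
  | .or φ ψ => topModalArgs φ ++ topModalArgs ψ
  | .dia φ => [φ]
  | .box φ => [φ]

theorem length_topModalArgs_le (θ : MLF) : (topModalArgs θ).length ≤ mlfms θ := by
  induction θ with
  | top | bot => exact le_rfl
  | and φ ψ ihφ ihψ | or φ ψ ihφ ihψ =>
    simp only [topModalArgs, mlfms, List.length_append]
    omega
  | dia φ | box φ => exact Nat.le_add_left 1 _

theorem sat_iff_of_succ_agree {M : KripkeModel.{u} Empty} {N : KripkeModel.{v} Empty}
    {w : M.W} {w' : N.W} (L : List MLF)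
    (forth : ∀ x, M.R w x → ∃ x', N.R w' x' ∧ ∀ φ ∈ L, (MLFSat M x φ ↔ MLFSat N x' φ))
    (back : ∀ x', N.R w' x' → ∃ x, M.R w x ∧ ∀ φ ∈ L, (MLFSat M x φ ↔ MLFSat N x' φ))
    (θ : MLF) (hθ : topModalArgs θ ⊆ L) : MLFSat M w θ ↔ MLFSat N w' θ := by
  induction θ with
  | top | bot => rfl
  | and φ ψ ihφ ihψ =>
    obtain ⟨hφ, hψ⟩ := List.append_subset.mp hθ
    exact and_congr (ihφ hφ) (ihψ hψ)
  | or φ ψ ihφ ihψ =>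
    obtain ⟨hφ, hψ⟩ := List.append_subset.mp hθ
    exact or_congr (ihφ hφ) (ihψ hψ)
  | dia φ =>
    have hφ : φ ∈ L := hθ (List.mem_singleton_self φ)
    constructor
    · rintro ⟨x, hx, hxφ⟩
      obtain ⟨x', hx', hagree⟩ := forth x hx
      exact ⟨x', hx', (hagree φ hφ).mp hxφ⟩
    · rintro ⟨x', hx', hxφ⟩
      obtain ⟨x, hx, hagree⟩ := back x' hx'
      exact ⟨x, hx, (hagree φ hφ).mpr hxφ⟩
  | box φ =>
    have hφ : φ ∈ L := hθ (List.mem_singleton_self φ)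
    constructor
    · intro h x' hx'
      obtain ⟨x, hx, hagree⟩ := back x' hx'
      exact (hagree φ hφ).mp (h x hx)
    · intro h x hx
      obtain ⟨x', hx', hagree⟩ := forth x hx
      exact (hagree φ hφ).mpr (h x' hx')

end MLF

open MLF

def canonicalFrame : KripkeModel.{u} Empty where
  W := ULift (Σ k, BisimType k)
  R
    | ⟨⟨k + 1, F⟩⟩, x => ∃ t ∈ F, x = ULift.up ⟨k, t⟩
    | ⟨⟨0, _⟩⟩, _ => False
  V := Empty.elim

def canonicalPoint (k : ℕ) (t : BisimType k) : canonicalFrame.{u}.W := ULift.up ⟨k, t⟩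

theorem canonicalFrame_rel_canonicalPoint_succ (k : ℕ) (F : BisimType (k + 1))
    (x : canonicalFrame.{u}.W) :
    canonicalFrame.R (canonicalPoint (k + 1) F) x ↔ ∃ t ∈ F, x = canonicalPoint k t :=
  Iff.rfl

theorem bisimType_canonicalPoint (k : ℕ) (t : BisimType k) :
    bisimType canonicalFrame.{u}.R k (canonicalPoint k t) = t := by
  induction k with
  | zero => rfl
  | succ k ih =>
    simp only [bisimType, canonicalFrame_rel_canonicalPoint_succ]
    ext s
    constructor
    · rintro ⟨_, ⟨s, hs, rfl⟩, rfl⟩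
      rwa [ih]
    · exact fun hs => ⟨_, ⟨s, hs, rfl⟩, ih s⟩

theorem sat_canonicalPoint_pair_iff_singleton {n : ℕ} {θ : MLF} {t t' : BisimType n}
    (hagree : ∀ φ ∈ topModalArgs θ, (MLFSat canonicalFrame.{u} (canonicalPoint n t') φ ↔
      MLFSat canonicalFrame.{u} (canonicalPoint n t) φ)) :
    MLFSat canonicalFrame.{u} (canonicalPoint (n + 1) {t, t'}) θ ↔
      MLFSat canonicalFrame.{u} (canonicalPoint (n + 1) {t}) θ := by
  refine sat_iff_of_succ_agree (topModalArgs θ) ?_ ?_ θ (List.Subset.refl _)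
  · rintro _ ⟨s, rfl | rfl, rfl⟩
    · exact ⟨_, ⟨s, rfl, rfl⟩, fun _ _ => Iff.rfl⟩
    · exact ⟨_, ⟨t, rfl, rfl⟩, hagree⟩
  · rintro _ ⟨s, rfl, rfl⟩
    exact ⟨_, ⟨s, Or.inl rfl, rfl⟩, fun _ _ => Iff.rfl⟩

theorem tower_le_two_pow_mlfms {n : ℕ} {θ : MLF}
    (hθ : ∀ F : BisimType (n + 1), MLFSat canonicalFrame.{u} (canonicalPoint (n + 1) F) θ ↔
      F.Nontrivial) :
    tower n ≤ 2 ^ mlfms θ := by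
  set L := topModalArgs θ
  let profile : BisimType n → Fin L.length → Prop :=
    fun t i => MLFSat canonicalFrame.{u} (canonicalPoint n t) L[i]
  have profile_injective : Function.Injective profile := by
    intro t t' hprofile
    by_contra hne
    have hpair_iff_single := sat_canonicalPoint_pair_iff_singleton (θ := θ) (t := t) (t' := t')
      fun φ hφ => by
        obtain ⟨i, hi, rfl⟩ := List.mem_iff_getElem.mp hφ
        exact iff_of_eq (congrFun hprofile ⟨i, hi⟩).symm
    rw [hθ, hθ] at hpair_iff_single
    exact Set.not_nontrivial_singleton (hpair_iff_single.mp (Set.nontrivial_pair hne))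
  calc tower n = Fintype.card (BisimType n) := (card_bisimType n).symm
    _ ≤ Fintype.card (Fin L.length → Prop) := Fintype.card_le_of_injective profile profile_injective
    _ = 2 ^ L.length := by simp
    _ ≤ 2 ^ mlfms θ := Nat.pow_le_pow_right two_pos (length_topModalArgs_le θ)

/-- **Corollary 19 (Hella–Vilander).**  Bisimulation invariant `FO` is nonelementarily
more succinct than `ML`: for every `n ≥ 1` there is a first-order formula `φₙ(x)` of size
`3 · 2^(n+2) - 7` (hence `O(2ⁿ)`) whose class of pointed frames is bisimulation invariant
and definable in `ML`, while every `ML`-formula defining the same class has size at least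
`tower (n - 1)`. -/
theorem fo_nonelementarily_more_succinct_than_ml (n : ℕ) (hn : 1 ≤ n) :
    ∃ ψ : FOForm, fosize ψ = 3 * 2 ^ (n + 2) - 7 ∧
      (∀ P Q : PointedModel.{u} Empty, Bisimilar P.M P.w Q.M Q.w →
        (∀ s : ℕ → P.M.W, s 0 = P.w → FOSat P.M.R s ψ) →
        (∀ s : ℕ → Q.M.W, s 0 = Q.w → FOSat Q.M.R s ψ)) ∧
      (∃ θ : MLF, MLFOEquiv.{u} θ ψ) ∧
      (∀ θ : MLF, MLFOEquiv.{u} θ ψ → tower (n - 1) ≤ mlfms θ + mlfcs θ) := by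
  refine ⟨succinctFormula n, fosize_succinctFormula n, ?_,
    ⟨definingFormula (n + 1) Set.Nontrivial, ?_⟩, ?_⟩
  · intro P Q hPQ
    simp only [forall_foSat_succinctFormula_iff, hPQ.bisimType_eq, imp_self]
  · exact (mlfoEquiv_succinctFormula_iff _ n).mpr fun P => sat_definingFormula _ _ _
  · intro θ hθ
    obtain ⟨m, rfl⟩ : ∃ m, n = m + 1 := ⟨n - 1, by omega⟩
    have h : tower (m + 1) ≤ 2 ^ mlfms θ := tower_le_two_pow_mlfms fun F => by
      rw [(mlfoEquiv_succinctFormula_iff θ _).mp hθ ⟨_, canonicalPoint _ F⟩,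
        bisimType_canonicalPoint]
    rw [tower, Nat.pow_le_pow_iff_right (by norm_num)] at h
    rw [Nat.add_sub_cancel]
    omega
end
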